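/- arXiv:2003.04623 — 2 statements merged into one kernel-verified Lean document; each statement's English description precedes it below -/
import Mathlib

section
/- For any extension of IL: if Γ ≺_S Δ then Γ ≺_{S ∪ Γ_S^⊡} Δ, where Γ_S^⊡ = { A : for some finite S' ⊆ S, ¬A ▷ ⋁_{S_i∈S'}¬S_i ∈ Γ } ∪ { □A : for some finite S' ⊆ S, ¬A ▷ ⋁_{S_i∈S'}¬S_i ∈ Γ }. -/
inductive ILForm : Type
  | bot : ILForm
  | var : ℕ → ILForm
  | imp : ILForm → ILForm → ILForm
  | box : ILForm → ILForm
  | rhd : ILForm → ILForm → ILForm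
  deriving DecidableEq

namespace ILForm

def neg (A : ILForm) : ILForm := A.imp ILForm.bot
def or (A B : ILForm) : ILForm := A.neg.imp B
def and (A B : ILForm) : ILForm := (A.imp B.neg).neg
def dia (A : ILForm) : ILForm := A.neg.box.neg

end ILForm

/-- A Boolean valuation: respects `⊥` and `→`, arbitrary on variables, boxes and `▷`. -/
def IsBoolVal (v : ILForm → Bool) : Prop :=
  v ILForm.bot = false ∧ ∀ A B : ILForm, v (A.imp B) = (!(v A) || v B)

/-- Classical tautologies in the modal language. -/
def ILTaut (A : ILForm) : Prop := ∀ v, IsBoolVal v → v A = true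

/-- Provability in the interpretability logic IL. -/
inductive ILProv : ILForm → Prop
  | taut {A : ILForm} : ILTaut A → ILProv A
  | K {A B : ILForm} : ILProv (((A.imp B).box).imp ((A.box).imp (B.box)))
  | L {A : ILForm} : ILProv ((((A.box).imp A).box).imp (A.box))
  | J1 {A B : ILForm} : ILProv (((A.imp B).box).imp (A.rhd B))
  | J2 {A B C : ILForm} : ILProv (((A.rhd B).and (B.rhd C)).imp (A.rhd C))
  | J3 {A B C : ILForm} : ILProv (((A.rhd C).and (B.rhd C)).imp ((A.or B).rhd C))
  | J4 {A B : ILForm} : ILProv ((A.rhd B).imp ((A.dia).imp (B.dia)))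
  | J5 {A : ILForm} : ILProv ((A.dia).rhd A)
  | mp {A B : ILForm} : ILProv (A.imp B) → ILProv A → ILProv B
  | nec {A : ILForm} : ILProv A → ILProv (A.box)

/-- An extension of IL: contains all IL theorems, closed under modus ponens and necessitation. -/
structure ILExtension (P : ILForm → Prop) : Prop where
  il : ∀ {A}, ILProv A → P A
  mp : ∀ {A B}, P (A.imp B) → P A → P B
  nec : ∀ {A}, P A → P (A.box)

/-- Derivability from a set of assumptions in the logic `P`. -/
inductive Deriv (P : ILForm → Prop) (S : Set ILForm) : ILForm → Prop
  | thm {A : ILForm} : P A → Deriv P S A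
  | mem {A : ILForm} : A ∈ S → Deriv P S A
  | mp {A B : ILForm} : Deriv P S (A.imp B) → Deriv P S A → Deriv P S B

def ILConsistent (P : ILForm → Prop) (S : Set ILForm) : Prop := ¬ Deriv P S ILForm.bot

/-- Maximal consistent set w.r.t. the logic `P`. -/
def ILMCS (P : ILForm → Prop) (S : Set ILForm) : Prop :=
  ILConsistent P S ∧ ∀ T : Set ILForm, S ⊂ T → ¬ ILConsistent P T

/-- Finite disjunction; the empty disjunction is `⊥`. -/
def bigOr : List ILForm → ILForm
  | [] => ILForm.bot
  | A :: l => A.or (bigOr l)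

/-- `Assuring Γ Δ S` ("Γ ≺_S Δ"): Δ is an S-assuring successor of Γ. -/
def Assuring (Γ Δ : Set ILForm) (S : Set ILForm) : Prop :=
  ∀ (A : ILForm) (L : List ILForm), (∀ B ∈ L, B ∈ S) →
    (A.neg.rhd (bigOr (L.map ILForm.neg))) ∈ Γ → A ∈ Δ ∧ A.box ∈ Δ

/-- `Succ Γ Δ` ("Γ ≺ Δ"): whenever □A ∈ Γ, both A and □A are in Δ. -/
def Succ (Γ Δ : Set ILForm) : Prop :=
  ∀ A : ILForm, A.box ∈ Γ → A ∈ Δ ∧ A.box ∈ Δ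

/-- The set Γ_S^⊡ of formulas (and their boxes) promised by Γ relative to the label S. -/
def boxdotSet (Γ S : Set ILForm) : Set ILForm :=
  {X | ∃ (A : ILForm) (L : List ILForm), (∀ B ∈ L, B ∈ S) ∧
      (A.neg.rhd (bigOr (L.map ILForm.neg))) ∈ Γ ∧ (X = A ∨ X = A.box)}

/-! Every member of `S ∪ Γ_S^⊡` has its negation interpretable in `Γ` by a finite disjunction of
negations of members of `S`: for `B ∈ S` trivially, for `A` with `¬A ▷ ⋁ ¬S'` by assumption, and
for `□A` because `¬□A → ◇¬A` is provable, `◇¬A ▷ ¬A` is J5, and `▷` is transitive (J2).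
Joining these by J3, `¬A ▷ ⋁_{S'} ¬S_j` with `S' ⊆ S ∪ Γ_S^⊡` chains into some `¬A ▷ ⋁_{S''} ¬S_j`
with `S'' ⊆ S`, and `Γ ≺_S Δ` applies. -/

section Valuation

variable {v : ILForm → Bool}

lemma IsBoolVal.apply_neg (hv : IsBoolVal v) (A : ILForm) : v A.neg = !v A := by
  simp [ILForm.neg, hv.2, hv.1]

lemma IsBoolVal.apply_or (hv : IsBoolVal v) (A B : ILForm) : v (A.or B) = (v A || v B) := by
  simp [ILForm.or, hv.2, hv.apply_neg]

lemma IsBoolVal.apply_and (hv : IsBoolVal v) (A B : ILForm) : v (A.and B) = (v A && v B) := by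
  simp only [ILForm.and, hv.apply_neg, hv.2]
  cases v A <;> cases v B <;> rfl

lemma IsBoolVal.apply_bigOr (hv : IsBoolVal v) (l : List ILForm) : v (bigOr l) = l.any v := by
  induction l with
  | nil => simpa [bigOr] using hv.1
  | cons a l ih => simp [bigOr, hv.apply_or, ih]

end Valuation

section MCS

variable {P : ILForm → Prop} {Γ : Set ILForm}

lemma Deriv.cut {A B : ILForm} (h : Deriv P (insert A Γ) B) (hA : Deriv P Γ A) :
    Deriv P Γ B := by
  induction h with
  | thm h => exact .thm h
  | mem h =>
    rcases h with rfl | h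
    · exact hA
    · exact .mem h
  | mp _ _ ih₁ ih₂ => exact .mp ih₁ ih₂

lemma ILMCS.mem_of_deriv (hΓ : ILMCS P Γ) {A : ILForm} (h : Deriv P Γ A) : A ∈ Γ := by
  by_contra hA
  exact hΓ.1 ((not_not.1 (hΓ.2 _ (Set.ssubset_insert hA))).cut h)

lemma ILMCS.mem_of_prov (hΓ : ILMCS P Γ) {A : ILForm} (h : P A) : A ∈ Γ :=
  hΓ.mem_of_deriv (.thm h)

lemma ILMCS.mem_of_imp_mem (hΓ : ILMCS P Γ) {A B : ILForm} (hAB : A.imp B ∈ Γ) (hA : A ∈ Γ) :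
    B ∈ Γ :=
  hΓ.mem_of_deriv (.mp (.mem hAB) (.mem hA))

end MCS

namespace ILExtension

variable {P : ILForm → Prop} (hP : ILExtension P) {Γ : Set ILForm}
include hP

lemma taut {A : ILForm} (h : ILTaut A) : P A := hP.il (.taut h)

lemma rhd_of_imp {A B : ILForm} (h : P (A.imp B)) : P (A.rhd B) :=
  hP.mp (hP.il .J1) (hP.nec h)

lemma and_mem (hΓ : ILMCS P Γ) {A B : ILForm} (hA : A ∈ Γ) (hB : B ∈ Γ) : A.and B ∈ Γ := by
  have hTaut : ILTaut (A.imp (B.imp (A.and B))) := fun v hv => by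
    simp only [hv.2, hv.apply_and]
    cases v A <;> cases v B <;> rfl
  exact hΓ.mem_of_imp_mem (hΓ.mem_of_imp_mem (hΓ.mem_of_prov (hP.taut hTaut)) hA) hB

lemma rhd_trans (hΓ : ILMCS P Γ) {A B C : ILForm} (hAB : A.rhd B ∈ Γ) (hBC : B.rhd C ∈ Γ) :
    A.rhd C ∈ Γ :=
  hΓ.mem_of_imp_mem (hΓ.mem_of_prov (hP.il .J2)) (hP.and_mem hΓ hAB hBC)

lemma or_rhd (hΓ : ILMCS P Γ) {A B C : ILForm} (hA : A.rhd C ∈ Γ) (hB : B.rhd C ∈ Γ) :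
    (A.or B).rhd C ∈ Γ :=
  hΓ.mem_of_imp_mem (hΓ.mem_of_prov (hP.il .J3)) (hP.and_mem hΓ hA hB)

lemma bigOr_rhd_bigOr_of_subset {l l' : List ILForm} (h : l ⊆ l') :
    P ((bigOr l).rhd (bigOr l')) := by
  refine hP.rhd_of_imp (hP.taut fun v hv => ?_)
  simp only [hv.2, hv.apply_bigOr]
  cases hl : l.any v
  · rfl
  · obtain ⟨B, hB, hvB⟩ := List.any_eq_true.1 hl
    simpa using List.any_eq_true.2 ⟨B, h hB, hvB⟩

lemma or_rhd_bigOr_append (hΓ : ILMCS P Γ) {A B : ILForm} {l l' : List ILForm}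
    (hA : A.rhd (bigOr l) ∈ Γ) (hB : B.rhd (bigOr l') ∈ Γ) :
    (A.or B).rhd (bigOr (l ++ l')) ∈ Γ :=
  hP.or_rhd hΓ
    (hP.rhd_trans hΓ hA (hΓ.mem_of_prov (hP.bigOr_rhd_bigOr_of_subset (List.subset_append_left l l'))))
    (hP.rhd_trans hΓ hB (hΓ.mem_of_prov (hP.bigOr_rhd_bigOr_of_subset (List.subset_append_right l l'))))

lemma neg_box_rhd_neg (hΓ : ILMCS P Γ) (C : ILForm) : C.box.neg.rhd C.neg ∈ Γ := by
  have hDNE : P (C.neg.neg.imp C) := hP.taut fun v hv => by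
    simp only [hv.2, hv.apply_neg]
    cases v C <;> rfl
  have hBoxDNE : P (C.neg.neg.box.imp C.box) := hP.mp (hP.il .K) (hP.nec hDNE)
  have hNegBoxDia : P (C.box.neg.imp C.neg.dia) := by
    refine hP.mp (hP.taut fun v hv => ?_) hBoxDNE
    simp only [ILForm.dia, hv.2, hv.apply_neg]
    cases v C.neg.neg.box <;> cases v C.box <;> rfl
  exact hP.rhd_trans hΓ (hΓ.mem_of_prov (hP.rhd_of_imp hNegBoxDia)) (hΓ.mem_of_prov (hP.il .J5))

lemma exists_neg_rhd_of_mem_boxdotSet (hΓ : ILMCS P Γ) {S : Set ILForm} {B : ILForm}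
    (hB : B ∈ S ∪ boxdotSet Γ S) :
    ∃ N : List ILForm, (∀ C ∈ N, C ∈ S) ∧ B.neg.rhd (bigOr (N.map ILForm.neg)) ∈ Γ := by
  rcases hB with hBS | ⟨C, N, hNS, hCN, rfl | rfl⟩
  · refine ⟨[B], by simpa using hBS, hΓ.mem_of_prov (hP.rhd_of_imp (hP.taut fun v hv => ?_))⟩
    simp only [List.map_cons, List.map_nil, bigOr, hv.2, hv.apply_or, hv.apply_neg, hv.1]
    cases v B <;> rfl
  · exact ⟨N, hNS, hCN⟩
  · exact ⟨N, hNS, hP.rhd_trans hΓ (hP.neg_box_rhd_neg hΓ C) hCN⟩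

lemma exists_bigOr_rhd_of_subset_boxdotSet (hΓ : ILMCS P Γ) (S : Set ILForm) (L : List ILForm)
    (hL : ∀ B ∈ L, B ∈ S ∪ boxdotSet Γ S) :
    ∃ M : List ILForm, (∀ B ∈ M, B ∈ S) ∧
      (bigOr (L.map ILForm.neg)).rhd (bigOr (M.map ILForm.neg)) ∈ Γ := by
  induction L with
  | nil => exact ⟨[], by simp, hΓ.mem_of_prov (hP.bigOr_rhd_bigOr_of_subset (by simp))⟩
  | cons B L ih =>
    obtain ⟨N, hNS, hN⟩ := hP.exists_neg_rhd_of_mem_boxdotSet hΓ (hL B List.mem_cons_self)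
    obtain ⟨M, hMS, hM⟩ := ih fun C hC => hL C (List.mem_cons_of_mem _ hC)
    refine ⟨N ++ M, fun C hC => (List.mem_append.1 hC).elim (hNS C) (hMS C), ?_⟩
    simpa [bigOr] using hP.or_rhd_bigOr_append hΓ hN hM

end ILExtension

theorem assuring_extend_boxdot_general (P : ILForm → Prop) (hP : ILExtension P)
    (Γ Δ : Set ILForm) (hΓ : ILMCS P Γ)
    (S : Set ILForm) (h : Assuring Γ Δ S) :
    Assuring Γ Δ (S ∪ boxdotSet Γ S) := by
  intro A L hL hA
  obtain ⟨M, hMS, hLM⟩ := hP.exists_bigOr_rhd_of_subset_boxdotSet hΓ S L hL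
  exact h A M hMS (hP.rhd_trans hΓ hA hLM)

/-- If Γ ≺_S Δ then Γ ≺_{S ∪ Γ_S^⊡} Δ. -/
theorem assuring_extend_boxdot (P : ILForm → Prop) (hP : ILExtension P)
    (Γ Δ : Set ILForm) (hΓ : ILMCS P Γ) (hΔ : ILMCS P Δ)
    (S : Set ILForm) (h : Assuring Γ Δ S) :
    Assuring Γ Δ (S ∪ boxdotSet Γ S) :=
  assuring_extend_boxdot_general P hP Γ Δ hΓ S h
end

section
/- For any logic ILX containing the schema P: (A ▷ B) → □(A ▷ B), if Γ ≺_S Λ and Λ ≺_T Δ with T a Λ-full label, then Γ ≺_T Δ. -/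
/-- S is a Γ-full label (w.r.t. the logic P). -/
def FullLabel (P : ILForm → Prop) (Γ S : Set ILForm) : Prop :=
  (∀ (A : ILForm) (L : List ILForm), (∀ B ∈ L, B ∈ S) →
      (A.neg.rhd (bigOr (L.map ILForm.neg))) ∈ Γ → A ∈ S ∧ A.box ∈ S) ∧
  (∀ φ : ILForm, Deriv P S φ → φ ∈ S) ∧
  (∀ B ∈ S, ILForm.box B ∈ S)


lemma deriv_cut {P : ILForm → Prop} {S : Set ILForm} {φ ψ : ILForm}
    (h : Deriv P (insert φ S) ψ) (hφ : Deriv P S φ) : Deriv P S ψ := by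
  induction h with
  | thm h => exact Deriv.thm h
  | mem h =>
    rcases h with h | h
    · exact h ▸ hφ
    · exact Deriv.mem h
  | mp _ _ ih1 ih2 => exact Deriv.mp ih1 ih2

lemma mcs_closed {P : ILForm → Prop} {Γ : Set ILForm} (hΓ : ILMCS P Γ)
    {φ : ILForm} (h : Deriv P Γ φ) : φ ∈ Γ := by
  by_contra hφ
  exact hΓ.2 _ (Set.ssubset_insert hφ) fun hd => hΓ.1 (deriv_cut hd h)

lemma p_chain {P : ILForm → Prop} (hP : ILExtension P) {a b c : ILForm}
    (h1 : P (a.imp b)) (h2 : P (b.imp c)) : P (a.imp c) := by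
  have ht : ILTaut ((a.imp b).imp ((b.imp c).imp (a.imp c))) := by
    intro v hv
    simp only [hv.2]
    cases v a <;> cases v b <;> cases v c <;> rfl
  exact hP.mp (hP.mp (hP.il (ILProv.taut ht)) h1) h2

lemma box_rhd_bot {P : ILForm → Prop} (hP : ILExtension P) (X : ILForm) :
    P ((X.box).imp (X.neg.rhd ILForm.bot)) := by
  have t1 : P (X.imp (X.neg.imp ILForm.bot)) := by
    apply hP.il; apply ILProv.taut
    intro v hv
    simp only [ILForm.neg, hv.2, hv.1]
    cases v X <;> rfl
  have t3 : P ((X.box).imp ((X.neg.imp ILForm.bot).box)) :=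
    hP.mp (hP.il ILProv.K) (hP.nec t1)
  exact p_chain hP t3 (hP.il ILProv.J1)

/-- For logics containing P: (A▷B)→□(A▷B), full labels propagate down. -/
theorem labelling_lemma_P (P : ILForm → Prop) (hP : ILExtension P)
    (hprP : ∀ A B : ILForm, P ((A.rhd B).imp ((A.rhd B).box)))
    (Γ Λ Δ : Set ILForm) (hΓ : ILMCS P Γ) (hΛ : ILMCS P Λ) (hΔ : ILMCS P Δ)
    (S T : Set ILForm) (hT : FullLabel P Λ T)
    (h1 : Assuring Γ Λ S) (h2 : Assuring Λ Δ T) :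
    Assuring Γ Δ T := by
  intro A L hL hmem
  set X := A.neg.rhd (bigOr (L.map ILForm.neg)) with hX
  have hbox : X.box ∈ Γ :=
    mcs_closed hΓ (Deriv.mp (Deriv.thm (hprP _ _)) (Deriv.mem hmem))
  have hr : X.neg.rhd (bigOr ([].map ILForm.neg)) ∈ Γ :=
    mcs_closed hΓ (Deriv.mp (Deriv.thm (box_rhd_bot hP X)) (Deriv.mem hbox))
  have hXΛ : X ∈ Λ := (h1 X [] (by simp) hr).1
  exact h2 A L hL hXΛ
end
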